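/- arXiv:1411.7890 — 3 statements merged into one kernel-verified Lean document; each statement's English description precedes it below -/
import Mathlib

section
/- Assume b_n > 1, and let J_1 ⊂ S' = K[x_1,…,x_{n−1}] be the monomial ideal with Mon(S'∖J_1) = {u ∈ Mon(S∖I) : x_n does not divide u}, so that dim S'/J_1 = 0 and Δ(J_1) is a simplicial complex on 𝒮 ∖ {x_{n,1},…,x_{n,b_n}}. Then del_{Δ(I)}(x_{n,1}) = x_{n,b_n} ∗ (x_{n,b_n−1} ∗ (⋯ ∗ (x_{n,2} ∗ Δ(J_1)))), the iterated cone over Δ(J_1) with apexes x_{n,2},…,x_{n,b_n}; equivalently, the facets of del_{Δ(I)}(x_{n,1}) are exactly the sets F ∪ {x_{n,2},…,x_{n,b_n}} with F a facet of Δ(J_1). -/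
/-!
A set of vertices is a face of `Δ(I)` iff it lies in some `𝒮 ∖ {x_{1,a_1+1}, …, x_{m,a_m+1}}`
with `x^a ∉ I`: if `F` is a face, take `a_i` to be the first gap of `F` in row `i`; then the
polarization of any generator of `I` dividing `x^a` would have its variables inside `F`. These
sets are pairwise incomparable, hence they are exactly the facets. The faces avoiding `x_{n,1}`
are those inside such a set with `a_n = 0` (lowering `a_n` keeps `x^a` outside `I`), and for
`a = (c, 0)` that set is the facet of `Δ(J₁)` attached to `x^c` together with
`x_{n,2}, …, x_{n,b_n}`.
-/

open MvPolynomial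

noncomputable section

/-- The vertex set / variable set `𝒮` of the polarized ring `S^℘`: pairs `⟨i, j⟩` with
`1 ≤ i ≤ n`, `1 ≤ j ≤ b i`.  Here `j : Fin (b i)` encodes the paper's second index `j + 1`,
so the vertex `⟨i, j⟩` stands for the variable `x_{i, j+1}` of the paper. -/
abbrev PolVars (m : ℕ) (b : Fin m → ℕ) := Σ i : Fin m, Fin (b i)

/-- `I` is a monomial ideal, i.e. generated by monomials. -/
def IsMonomialIdeal {K : Type} [Field K] {m : ℕ} (I : Ideal (MvPolynomial (Fin m) K)) : Prop :=
  ∃ A : Set (Fin m →₀ ℕ), I = Ideal.span ((fun c => (monomial c (1 : K))) '' A)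

/-- The exponent vectors of the minimal monomial generators of a monomial ideal:
the exponent vectors of monomials of `I` that are minimal under divisibility. -/
def MinGens (K : Type) [Field K] {m : ℕ} (I : Ideal (MvPolynomial (Fin m) K)) :
    Set (Fin m →₀ ℕ) :=
  {c | (monomial c (1 : K)) ∈ I ∧ ∀ c' : Fin m →₀ ℕ, c' ≤ c → c' ≠ c →
      (monomial c' (1 : K)) ∉ I}

/-- The polarization `v^℘ = ∏_{i=1}^n ∏_{j=1}^{c_i} x_{i,j}` of the monomial `v = x^c`. -/
def polMon (K : Type) [Field K] {m : ℕ} (b : Fin m → ℕ) (c : Fin m →₀ ℕ) :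
    MvPolynomial (PolVars m b) K :=
  ∏ v ∈ Finset.univ.filter (fun v : PolVars m b => (v.2 : ℕ) < c v.1), X v

/-- The polarization `I^℘ ⊆ S^℘` of the monomial ideal `I`, generated by the
polarizations of the minimal monomial generators of `I`. -/
def polarIdeal (K : Type) [Field K] {m : ℕ} (b : Fin m → ℕ)
    (I : Ideal (MvPolynomial (Fin m) K)) : Ideal (MvPolynomial (PolVars m b) K) :=
  Ideal.span (polMon K b '' MinGens K I)

/-- The squarefree monomial `x_{1,a_1+1} ⋯ x_{n,a_n+1} ∈ S^℘` associated with the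
exponent vector `a` of a monomial `x^a ∈ Mon(S∖I)`. -/
def genL (K : Type) [Field K] {m : ℕ} (b : Fin m → ℕ) (a : Fin m →₀ ℕ) :
    MvPolynomial (PolVars m b) K :=
  ∏ v ∈ Finset.univ.filter (fun v : PolVars m b => (v.2 : ℕ) = a v.1), X v

/-- The ideal `L(I) ⊆ S^℘`, generated by the monomials `x_{1,a_1+1} ⋯ x_{n,a_n+1}`
with `x^a ∈ Mon(S∖I)`. -/
def LIdeal (K : Type) [Field K] {m : ℕ} (b : Fin m → ℕ)
    (I : Ideal (MvPolynomial (Fin m) K)) : Ideal (MvPolynomial (PolVars m b) K) :=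
  Ideal.span (genL K b '' {a | (monomial a (1 : K)) ∉ I})

/-- The monomial prime ideal `φ(x^a) = (x_{1,a_1+1}, …, x_{n,a_n+1}) ⊆ S^℘`. -/
def phiIdeal (K : Type) [Field K] {m : ℕ} (b : Fin m → ℕ) (a : Fin m →₀ ℕ) :
    Ideal (MvPolynomial (PolVars m b) K) :=
  Ideal.span ((fun v => (X v : MvPolynomial (PolVars m b) K)) ''
    {v : PolVars m b | (v.2 : ℕ) = a v.1})

/-- The set of faces of the simplicial complex `Δ(I)` on the vertex set `𝒮`, whose
Stanley–Reisner ideal is `I^℘`: a finite set `F` of vertices is a face iff the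
squarefree monomial `∏_{v ∈ F} v` does not belong to `I^℘`. -/
def facesDelta (K : Type) [Field K] {m : ℕ} (b : Fin m → ℕ)
    (I : Ideal (MvPolynomial (Fin m) K)) : Set (Finset (PolVars m b)) :=
  {F | (∏ v ∈ F, (X v : MvPolynomial (PolVars m b) K)) ∉ polarIdeal K b I}

/-- `F` is a facet (maximal face) of the simplicial complex (set of faces) `Δ`. -/
def IsFacetOf {V : Type} (Δ : Set (Finset V)) (F : Finset V) : Prop :=
  F ∈ Δ ∧ ∀ G ∈ Δ, F ⊆ G → F = G

/-- Zero-dimensionality data for a monomial ideal: `I` is a proper monomial ideal and,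
for each `i`, `b i ≥ 1` is the smallest positive integer with `x_i^{b i} ∈ I`
(equivalently, `dim S/I = 0` with the `b i` minimal). -/
def ZeroDimData (K : Type) [Field K] {m : ℕ} (b : Fin m → ℕ)
    (I : Ideal (MvPolynomial (Fin m) K)) : Prop :=
  IsMonomialIdeal I ∧ I ≠ ⊤ ∧ ∀ i : Fin m, 1 ≤ b i ∧
    (monomial (Finsupp.single i (b i)) (1 : K)) ∈ I ∧
    ∀ j : ℕ, j < b i → (monomial (Finsupp.single i j) (1 : K)) ∉ I

/-- The deletion `del_Δ(v) = {G ∈ Δ : v ∉ G}`. -/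
def delC {V : Type} (Δ : Set (Finset V)) (v : V) : Set (Finset V) :=
  {G ∈ Δ | v ∉ G}

/-- The link `link_Δ(v) = {G ∈ Δ : v ∉ G and G ∪ {v} ∈ Δ}`. -/
def linkC {V : Type} [DecidableEq V] (Δ : Set (Finset V)) (v : V) : Set (Finset V) :=
  {G ∈ Δ | v ∉ G ∧ insert v G ∈ Δ}

/-- Vertex decomposability of a simplicial complex (given as its set of faces):
`Δ` is vertex decomposable if it is a simplex, or it contains a vertex `v` such that
(i) every facet of `del_Δ(v)` is a facet of `Δ` (`v` is a shedding vertex), and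
(ii) both `del_Δ(v)` and `link_Δ(v)` are vertex decomposable. -/
inductive IsVertexDecomposable {V : Type} [DecidableEq V] : Set (Finset V) → Prop
  | simplex (F : Finset V) : IsVertexDecomposable {G | G ⊆ F}
  | shed (Δ : Set (Finset V)) (v : V) (hv : {v} ∈ Δ)
      (hshed : ∀ F : Finset V, IsFacetOf (delC Δ v) F → IsFacetOf Δ F)
      (hdel : IsVertexDecomposable (delC Δ v))
      (hlink : IsVertexDecomposable (linkC Δ v)) : IsVertexDecomposable Δ

/-- The vertex map replacing `x_{i₀,j}` by `x_{i₀,j-1}` and fixing all other vertices. -/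
def shiftDown {m : ℕ} {b : Fin m → ℕ} (i₀ : Fin m) (v : PolVars m b) : PolVars m b :=
  ⟨v.1, ⟨(v.2 : ℕ) - (if v.1 = i₀ then 1 else 0),
    Nat.lt_of_le_of_lt (Nat.sub_le _ _) v.2.isLt⟩⟩

/-- `set(u)` for a generator `u = genL a` of `L(I)` with respect to the order `r`:
the set of variables `x` of `S^℘` such that `x·u` lies in the ideal generated by the
generators of `L(I)` preceding `u`. -/
def setOfGen (K : Type) [Field K] {m : ℕ} (b : Fin m → ℕ)
    (I : Ideal (MvPolynomial (Fin m) K))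
    (r : (Fin m →₀ ℕ) → (Fin m →₀ ℕ) → Prop) (a : Fin m →₀ ℕ) : Set (PolVars m b) :=
  {v | ∃ a' : Fin m →₀ ℕ, (monomial a' (1 : K)) ∉ I ∧ r a' a ∧ a' ≠ a ∧
      genL K b a' ∣ X v * genL K b a}

/-- `J(u,i)`: the weakly increasing sequence of the second indices of the variables
`x_{i,·}` dividing the monomial with exponent vector `e` (counted with multiplicity). -/
def rowList {m : ℕ} {b : Fin m → ℕ} (e : PolVars m b →₀ ℕ) (i : Fin m) : List ℕ :=
  Multiset.sort (∑ j : Fin (b i), Multiset.replicate (e ⟨i, j⟩) (j : ℕ)) (· ≤ ·)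

/-- Lexicographic (weak) order on sequences of natural numbers. -/
def lexLE (l l' : List ℕ) : Prop := l = l' ∨ List.Lex (· < ·) l l'

/-- The exponent vectors of the (minimal) monomial generators of `L(I)^k`:
products of `k` generators of `L(I)`. -/
def GLkE (K : Type) [Field K] {m : ℕ} (b : Fin m → ℕ)
    (I : Ideal (MvPolynomial (Fin m) K)) (k : ℕ) : Set (PolVars m b →₀ ℕ) :=
  {e | ∃ f : Fin k → (Fin m →₀ ℕ), (∀ j, (monomial (f j) (1 : K)) ∉ I) ∧
      (monomial e (1 : K) : MvPolynomial (PolVars m b) K) = ∏ j, genL K b (f j)}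

/-- The depth of a module `M` with respect to the ideal `J`: the maximal length of an
`M`-regular sequence consisting of elements of `J`. -/
def myDepth (R : Type) [CommRing R] (J : Ideal R) (M : Type) [AddCommGroup M]
    [Module R M] : ℕ :=
  sSup {k : ℕ | ∃ rs : List R, rs.length = k ∧ (∀ r ∈ rs, r ∈ J) ∧
      RingTheory.Sequence.IsRegular M rs}

/-- `max{deg lcm(u_1, …, u_k) : u_1, …, u_k ∈ Mon(S∖I)}`; the degree of the lcm of the
monomials `x^{f 1}, …, x^{f k}` is `∑_i max_j (f j) i`. -/
def maxLcmDeg (K : Type) [Field K] {m : ℕ} (I : Ideal (MvPolynomial (Fin m) K))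
    (k : ℕ) : ℕ :=
  sSup {d : ℕ | ∃ f : Fin k → (Fin m →₀ ℕ), (∀ j, (monomial (f j) (1 : K)) ∉ I) ∧
      d = ∑ i : Fin m, Finset.univ.sup (fun j => (f j) i)}

section Facets

variable {V α : Type}

theorem isFacetOf_iff_of_mem_iff {Δ : Set (Finset V)} {A : Set α} {f : α → Finset V}
    (hΔ : ∀ G, G ∈ Δ ↔ ∃ a ∈ A, G ⊆ f a)
    (hf : ∀ a ∈ A, ∀ a' ∈ A, f a ⊆ f a' → f a = f a') (F : Finset V) :
    IsFacetOf Δ F ↔ ∃ a ∈ A, F = f a := by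
  have hfΔ : ∀ a ∈ A, f a ∈ Δ := fun a ha => (hΔ _).2 ⟨a, ha, subset_rfl⟩
  constructor
  · rintro ⟨hF, hmax⟩
    obtain ⟨a, ha, hFa⟩ := (hΔ F).1 hF
    exact ⟨a, ha, hmax _ (hfΔ a ha) hFa⟩
  · rintro ⟨a, ha, rfl⟩
    refine ⟨hfΔ a ha, fun G hG haG => ?_⟩
    obtain ⟨a', ha', hGa'⟩ := (hΔ G).1 hG
    exact haG.antisymm (hf a ha a' ha' (haG.trans hGa') ▸ hGa')

end Facets

section SquarefreeMonomials

variable {σ R : Type*} [CommSemiring R] [DecidableEq σ]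

theorem prod_X_eq_monomial_toFinsupp (F : Finset σ) :
    ∏ v ∈ F, (X v : MvPolynomial σ R) = monomial (Multiset.toFinsupp F.val) 1 := by
  rw [← prod_X_pow_eq_monomial, Multiset.toFinsupp_support, Finset.val_toFinset]
  refine Finset.prod_congr rfl fun v hv => ?_
  rw [Multiset.toFinsupp_apply, Multiset.count_eq_one_of_mem F.nodup hv, pow_one]

theorem prod_X_mem_span_prod_X_iff [Nontrivial R] (𝒮 : Set (Finset σ)) (F : Finset σ) :
    ∏ v ∈ F, (X v : MvPolynomial σ R) ∈ Ideal.span ((fun S => ∏ v ∈ S, X v) '' 𝒮) ↔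
      ∃ S ∈ 𝒮, S ⊆ F := by
  simp_rw [prod_X_eq_monomial_toFinsupp]
  classical
  rw [← Set.image_image (fun s => monomial s (1 : R)), mem_ideal_span_monomial_image,
    support_monomial, if_neg one_ne_zero]
  simp [← Finset.val_le_iff, ← Finsupp.coe_orderIsoMultiset_symm]

end SquarefreeMonomials

section Polarization

variable {K : Type} [Field K] {m : ℕ} {b : Fin m → ℕ} {I : Ideal (MvPolynomial (Fin m) K)}

theorem monomial_mem_of_le {c c' : Fin m →₀ ℕ} (h : monomial c (1 : K) ∈ I) (hle : c ≤ c') :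
    monomial c' (1 : K) ∈ I :=
  I.mem_of_dvd (monomial_dvd_monomial.2 ⟨Or.inr hle, one_dvd _⟩) h

theorem exists_mem_minGens_le {a : Fin m →₀ ℕ} (h : monomial a (1 : K) ∈ I) :
    ∃ c ∈ MinGens K I, c ≤ a := by
  obtain ⟨c, ⟨hcI, hca⟩, hmin⟩ :=
    (Finsupp.lt_wf (Fin m)).has_min {c | monomial c (1 : K) ∈ I ∧ c ≤ a} ⟨a, h, le_rfl⟩
  exact ⟨c, ⟨hcI, fun c' hle hne hc'I =>
    hmin c' ⟨hc'I, hle.trans hca⟩ (lt_of_le_of_ne hle hne)⟩, hca⟩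

theorem lt_of_monomial_notMem (hb : ∀ i, monomial (Finsupp.single i (b i)) (1 : K) ∈ I)
    {a : Fin m →₀ ℕ} (ha : monomial a (1 : K) ∉ I) (i : Fin m) : a i < b i := by
  by_contra! h
  exact ha (monomial_mem_of_le (hb i) (Finsupp.single_le_iff.2 h))

variable (b)

def polSupport (c : Fin m →₀ ℕ) : Finset (PolVars m b) :=
  Finset.univ.filter fun v => (v.2 : ℕ) < c v.1

/-- The facet `𝒮 ∖ {x_{1,a_1+1}, …, x_{m,a_m+1}}` of `Δ(I)` attached to `x^a ∉ I`. -/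
def stdFacet (a : Fin m →₀ ℕ) : Finset (PolVars m b) :=
  Finset.univ.filter fun v => (v.2 : ℕ) ≠ a v.1

/-- The exponent vector whose `i`-th entry is the least `j` with `x_{i,j+1} ∉ F`
(or `b i` if there is none). -/
def firstGap (F : Finset (PolVars m b)) : Fin m →₀ ℕ :=
  Finsupp.equivFunOnFinite.symm fun i =>
    sInf {j | ∀ hj : j < b i, (⟨i, ⟨j, hj⟩⟩ : PolVars m b) ∉ F}

variable {b}

theorem mem_stdFacet {a : Fin m →₀ ℕ} {v : PolVars m b} :
    v ∈ stdFacet b a ↔ (v.2 : ℕ) ≠ a v.1 := by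
  simp [stdFacet]

theorem polSupport_mono {c c' : Fin m →₀ ℕ} (h : c ≤ c') : polSupport b c ⊆ polSupport b c' :=
  Finset.monotone_filter_right _ fun v _ hv => lt_of_lt_of_le hv (h v.1)

theorem polSupport_firstGap_subset (F : Finset (PolVars m b)) :
    polSupport b (firstGap b F) ⊆ F := by
  rintro ⟨i, j⟩ hj
  have hj : (j : ℕ) < firstGap b F i := (Finset.mem_filter.1 hj).2
  have := Nat.notMem_of_lt_sInf hj
  simp only [Set.mem_ofPred_eq, not_forall, not_not] at this
  exact this.2

theorem subset_stdFacet_firstGap (F : Finset (PolVars m b)) : F ⊆ stdFacet b (firstGap b F) := by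
  rintro ⟨i, j⟩ hv
  rw [mem_stdFacet]
  intro hj
  have hgap : firstGap b F i ∈ {j | ∀ hj : j < b i, (⟨i, ⟨j, hj⟩⟩ : PolVars m b) ∉ F} :=
    Nat.sInf_mem ⟨b i, fun h => absurd h (lt_irrefl _)⟩
  exact hgap (hj ▸ j.isLt) (by simpa [← hj] using hv)

theorem prod_X_mem_polarIdeal_iff (F : Finset (PolVars m b)) :
    ∏ v ∈ F, (X v : MvPolynomial (PolVars m b) K) ∈ polarIdeal K b I ↔
      ∃ c ∈ MinGens K I, polSupport b c ⊆ F := by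
  rw [polarIdeal, show polMon K b = fun c => ∏ v ∈ polSupport b c, X v from rfl,
    ← Set.image_image (fun S => ∏ v ∈ S, (X v : MvPolynomial _ K)) (polSupport b),
    prod_X_mem_span_prod_X_iff]
  exact Set.exists_mem_image

theorem mem_facesDelta_iff (hb : ∀ i, monomial (Finsupp.single i (b i)) (1 : K) ∈ I)
    (F : Finset (PolVars m b)) :
    F ∈ facesDelta K b I ↔ ∃ a, monomial a (1 : K) ∉ I ∧ F ⊆ stdFacet b a := by
  rw [facesDelta, Set.mem_ofPred_eq, prod_X_mem_polarIdeal_iff]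
  constructor
  · refine fun hF => ⟨firstGap b F, fun hI => ?_, subset_stdFacet_firstGap F⟩
    obtain ⟨c, hc, hle⟩ := exists_mem_minGens_le hI
    exact hF ⟨c, hc, (polSupport_mono hle).trans (polSupport_firstGap_subset F)⟩
  · rintro ⟨a, haI, hFa⟩ ⟨c, hc, hcF⟩
    refine haI (monomial_mem_of_le hc.1 fun i => ?_)
    by_contra! hlt
    have hv : (⟨i, ⟨a i, lt_of_monomial_notMem hb haI i⟩⟩ : PolVars m b) ∈ polSupport b c :=
      Finset.mem_filter.2 ⟨Finset.mem_univ _, hlt⟩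
    exact mem_stdFacet.1 (hFa (hcF hv)) rfl

theorem eq_of_stdFacet_subset {a a' : Fin m →₀ ℕ} (ha' : ∀ i, a' i < b i)
    (h : stdFacet b a ⊆ stdFacet b a') : stdFacet b a = stdFacet b a' := by
  have : a = a' := Finsupp.ext fun i => by
    by_contra hne
    exact mem_stdFacet.1 (h (mem_stdFacet.2 (Ne.symm hne) : ⟨i, ⟨a' i, ha' i⟩⟩ ∈ _)) rfl
  rw [this]

theorem isFacetOf_facesDelta_iff (hb : ∀ i, monomial (Finsupp.single i (b i)) (1 : K) ∈ I)
    (F : Finset (PolVars m b)) :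
    IsFacetOf (facesDelta K b I) F ↔ ∃ a, monomial a (1 : K) ∉ I ∧ F = stdFacet b a :=
  isFacetOf_iff_of_mem_iff (mem_facesDelta_iff hb)
    (fun _ _ _ ha' => eq_of_stdFacet_subset (lt_of_monomial_notMem hb ha')) F

theorem mem_delC_facesDelta_iff (hb : ∀ i, monomial (Finsupp.single i (b i)) (1 : K) ∈ I)
    {v₀ : PolVars m b} (hv₀ : (v₀.2 : ℕ) = 0) (G : Finset (PolVars m b)) :
    G ∈ delC (facesDelta K b I) v₀ ↔
      ∃ a, (monomial a (1 : K) ∉ I ∧ a v₀.1 = 0) ∧ G ⊆ stdFacet b a := by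
  rw [delC, Set.mem_sep_iff, mem_facesDelta_iff hb]
  constructor
  · rintro ⟨⟨a, haI, hGa⟩, hv₀G⟩
    have hle : a.erase v₀.1 ≤ a := fun i => by
      rw [Finsupp.erase_apply]
      split_ifs <;> simp
    refine ⟨a.erase v₀.1, ⟨fun h => haI (monomial_mem_of_le h hle), Finsupp.erase_same⟩,
      fun v hv => mem_stdFacet.2 ?_⟩
    rw [Finsupp.erase_apply]
    split_ifs with hv1
    · rintro hv2
      obtain ⟨i, j⟩ := v
      obtain ⟨i₀, j₀⟩ := v₀
      obtain rfl : i = i₀ := hv1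
      obtain rfl : j = j₀ := Fin.ext (hv2.trans hv₀.symm)
      exact hv₀G hv
    · exact mem_stdFacet.1 (hGa hv)
  · rintro ⟨a, ⟨haI, ha0⟩, hGa⟩
    exact ⟨⟨a, haI, hGa⟩, fun hv₀G => mem_stdFacet.1 (hGa hv₀G) (hv₀.trans ha0.symm)⟩

theorem isFacetOf_delC_facesDelta_iff (hb : ∀ i, monomial (Finsupp.single i (b i)) (1 : K) ∈ I)
    {v₀ : PolVars m b} (hv₀ : (v₀.2 : ℕ) = 0) (F : Finset (PolVars m b)) :
    IsFacetOf (delC (facesDelta K b I) v₀) F ↔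
      ∃ a, (monomial a (1 : K) ∉ I ∧ a v₀.1 = 0) ∧ F = stdFacet b a :=
  isFacetOf_iff_of_mem_iff (mem_delC_facesDelta_iff hb hv₀)
    (fun _ _ _ ha' => eq_of_stdFacet_subset (lt_of_monomial_notMem hb ha'.1)) F

end Polarization

section LastVariable

variable {n : ℕ} {b : Fin (n + 1) → ℕ} {b' : Fin n → ℕ}

theorem embDomain_castSucc_apply_last (c : Fin n →₀ ℕ) :
    Finsupp.embDomain ⟨Fin.castSucc, Fin.castSucc_injective n⟩ c (Fin.last n) = 0 :=
  Finsupp.embDomain_of_notMem_range _ _ _ (by simp)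

theorem embDomain_castSucc_apply_castSucc (c : Fin n →₀ ℕ) (i : Fin n) :
    Finsupp.embDomain ⟨Fin.castSucc, Fin.castSucc_injective n⟩ c i.castSucc = c i :=
  Finsupp.embDomain_apply_self _ c i

theorem exists_embDomain_castSucc_eq {a : Fin (n + 1) →₀ ℕ} (ha : a (Fin.last n) = 0) :
    ∃ c, Finsupp.embDomain ⟨Fin.castSucc, Fin.castSucc_injective n⟩ c = a :=
  (Finsupp.mem_range_embDomain_iff _ a).2 fun _ hi =>
    Fin.exists_castSucc_eq.2 fun h => Finsupp.mem_support_iff.1 hi (h ▸ ha)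

theorem stdFacet_embDomain_castSucc (hb' : ∀ i : Fin n, b' i = b i.castSucc) (c : Fin n →₀ ℕ) :
    stdFacet b (Finsupp.embDomain ⟨Fin.castSucc, Fin.castSucc_injective n⟩ c) =
      (stdFacet b' c).image (fun v => (⟨v.1.castSucc, Fin.cast (hb' v.1) v.2⟩ :
            PolVars (n + 1) b))
        ∪ Finset.univ.filter
            (fun v : PolVars (n + 1) b => v.1 = Fin.last n ∧ 1 ≤ (v.2 : ℕ)) := by
  ext ⟨i, j⟩
  induction i using Fin.lastCases with
  | last => simp [mem_stdFacet, embDomain_castSucc_apply_last, Nat.one_le_iff_ne_zero]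
  | cast i =>
    simp only [mem_stdFacet, embDomain_castSucc_apply_castSucc, Finset.mem_union,
      Finset.mem_image, Finset.mem_filter, Sigma.mk.inj_iff, Fin.castSucc_inj,
      Fin.castSucc_ne_last, false_and, and_false, or_false]
    constructor
    · exact fun hj => ⟨⟨i, Fin.cast (hb' i).symm j⟩, hj, rfl, by simp⟩
    · rintro ⟨⟨_, k⟩, hk, rfl, hkj⟩
      rwa [← eq_of_heq hkj, Fin.val_cast]

end LastVariable

theorem statement12_general {K : Type} [Field K] {n : ℕ} (b : Fin (n + 1) → ℕ)
    (I : Ideal (MvPolynomial (Fin (n + 1)) K)) (hI : ZeroDimData K b I)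
    (v₀ : PolVars (n + 1) b) (hv₀₁ : v₀.1 = Fin.last n) (hv₀₂ : (v₀.2 : ℕ) = 0)
    (b' : Fin n → ℕ) (hb' : ∀ i : Fin n, b' i = b i.castSucc)
    (J₁ : Ideal (MvPolynomial (Fin n) K)) (hJ₁ : ZeroDimData K b' J₁)
    (hJ₁Mon : ∀ c : Fin n →₀ ℕ, (monomial c (1 : K)) ∉ J₁ ↔
      (monomial (Finsupp.embDomain ⟨Fin.castSucc, Fin.castSucc_injective n⟩ c) (1 : K)) ∉ I) :
    ∀ F : Finset (PolVars (n + 1) b),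
      IsFacetOf (delC (facesDelta K b I) v₀) F ↔
        ∃ G : Finset (PolVars n b'), IsFacetOf (facesDelta K b' J₁) G ∧
          F = G.image (fun v => (⟨v.1.castSucc, Fin.cast (hb' v.1) v.2⟩ :
                PolVars (n + 1) b))
              ∪ Finset.univ.filter
                  (fun v : PolVars (n + 1) b => v.1 = Fin.last n ∧ 1 ≤ (v.2 : ℕ)) := by
  intro F
  have hbI := fun i => (hI.2.2 i).2.1
  have hbJ := fun i => (hJ₁.2.2 i).2.1
  simp_rw [isFacetOf_delC_facesDelta_iff hbI hv₀₂, hv₀₁, isFacetOf_facesDelta_iff hbJ]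
  constructor
  · rintro ⟨a, ⟨haI, ha0⟩, rfl⟩
    obtain ⟨c, rfl⟩ := exists_embDomain_castSucc_eq ha0
    exact ⟨_, ⟨c, (hJ₁Mon c).2 haI, rfl⟩, stdFacet_embDomain_castSucc hb' c⟩
  · rintro ⟨_, ⟨c, hcJ, rfl⟩, rfl⟩
    exact ⟨_, ⟨(hJ₁Mon c).1 hcJ, embDomain_castSucc_apply_last c⟩,
      (stdFacet_embDomain_castSucc hb' c).symm⟩

/-- Assume `b_n > 1`, and let `J₁ ⊂ S' = K[x_1,…,x_{n−1}]` be the monomial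
ideal with `Mon(S'∖J₁) = {u ∈ Mon(S∖I) : x_n ∤ u}` (so `dim S'/J₁ = 0` and `Δ(J₁)` is a
simplicial complex on `𝒮 ∖ {x_{n,1},…,x_{n,b_n}}`).  Then
`del_{Δ(I)}(x_{n,1}) = x_{n,b_n} ∗ (⋯ ∗ (x_{n,2} ∗ Δ(J₁)))`; equivalently, the facets of
`del_{Δ(I)}(x_{n,1})` are exactly the sets `F ∪ {x_{n,2},…,x_{n,b_n}}` with `F` a facet
of `Δ(J₁)`.  (We formalize this with `n+1` variables, the distinguished one being the
last, and `Δ(J₁)` on the vertex set `PolVars n b'` embedded into `PolVars (n+1) b`.) -/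
theorem statement12 {K : Type} [Field K] {n : ℕ} (b : Fin (n + 1) → ℕ)
    (I : Ideal (MvPolynomial (Fin (n + 1)) K)) (hI : ZeroDimData K b I)
    (hbn : 1 < b (Fin.last n))
    (v₀ : PolVars (n + 1) b) (hv₀₁ : v₀.1 = Fin.last n) (hv₀₂ : (v₀.2 : ℕ) = 0)
    (b' : Fin n → ℕ) (hb' : ∀ i : Fin n, b' i = b i.castSucc)
    (J₁ : Ideal (MvPolynomial (Fin n) K)) (hJ₁ : ZeroDimData K b' J₁)
    (hJ₁Mon : ∀ c : Fin n →₀ ℕ, (monomial c (1 : K)) ∉ J₁ ↔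
      (monomial (Finsupp.embDomain ⟨Fin.castSucc, Fin.castSucc_injective n⟩ c) (1 : K)) ∉ I) :
    ∀ F : Finset (PolVars (n + 1) b),
      IsFacetOf (delC (facesDelta K b I) v₀) F ↔
        ∃ G : Finset (PolVars n b'), IsFacetOf (facesDelta K b' J₁) G ∧
          F = G.image (fun v => (⟨v.1.castSucc, Fin.cast (hb' v.1) v.2⟩ :
                PolVars (n + 1) b))
              ∪ Finset.univ.filter
                  (fun v : PolVars (n + 1) b => v.1 = Fin.last n ∧ 1 ≤ (v.2 : ℕ)) :=
  statement12_general b I hI v₀ hv₀₁ hv₀₂ b' hb' J₁ hJ₁ hJ₁Mon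

end
end

section
/- For every integer k ≥ 1, the ideal L(I)^k has linear quotients; that is, with respect to any total order ≤ on the minimal generating set G(L(I)^k) extending the partial order ≼ defined below, for every u ∈ G(L(I)^k) the colon ideal ({w ∈ G(L(I)^k) : w < u}) : (u) is generated by a subset of the variables of S^℘. -/
open MvPolynomial

noncomputable section

/-!
A generator `u` of `L(I)^k` is a product `∏ⱼ genL (f j)` with `x^{f j} ∉ I`, so its `i`-th row
`J(u,i)` is the multiset `{f j i}`, of size `k` because `f j i < b i`. If `w` precedes `u`, then
some row of `w` is lexicographically smaller: at the first value `x` where the two rows differ,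
`w` has more entries `x` than `u`. As both rows have `k` entries, `u` has surplus entries at some
`y > x`, say `f j₀ i = y`. Lowering this coordinate of `f j₀` to `x` keeps it outside the monomial
ideal `I` and yields a generator `u' = u · X⟨i,x⟩ / X⟨i,y⟩` preceding `u`. So the variable
`X⟨i,x⟩`, which divides `w / gcd(w, u)`, lies in the colon ideal, and the colon ideal is generated
by such variables.
-/

open Finsupp

theorem List.lex_lt_of_count_lt {l l' : List ℕ} (hlen : l.length = l'.length)
    (hl : l.Pairwise (· ≤ ·)) (hl' : l'.Pairwise (· ≤ ·)) {x : ℕ}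
    (hx : l'.count x < l.count x) (hbelow : ∀ z < x, l.count z = l'.count z) :
    List.Lex (· < ·) l l' := by
  induction l generalizing l' with
  | nil => simp at hx
  | cons a t ih =>
    obtain _ | ⟨a', t'⟩ := l'
    · simp at hlen
    have count_of_lt : ∀ z < a, (a :: t).count z = 0 := fun z hz =>
      List.count_eq_zero.2 fun hmem => by
        rcases List.mem_cons.1 hmem with rfl | hm
        · omega
        · exact absurd (List.rel_of_pairwise_cons hl hm) (by omega)
    have hax : a ≤ x := by
      by_contra! h
      have := count_of_lt x h
      omega
    have haa' : a ≤ a' := by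
      by_contra! h
      have := count_of_lt a' h
      have := hbelow a' (by omega)
      simp_all [List.count_cons]
    obtain haa' | rfl := haa'.lt_or_eq
    · exact List.Lex.rel haa'
    refine List.Lex.cons (ih (by simpa using hlen) hl.of_cons hl'.of_cons ?_ fun z hz => ?_)
    · simpa [List.count_cons] using hx
    · simpa [List.count_cons] using hbelow z hz

namespace Multiset

theorem lex_sort_of_toLex_toFinsupp_lt {A B : Multiset ℕ} (hcard : card A = card B)
    (h : toLex (toFinsupp B) < toLex (toFinsupp A)) :
    List.Lex (· < ·) (A.sort (· ≤ ·)) (B.sort (· ≤ ·)) := by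
  obtain ⟨x, hbelow, hx⟩ := Finsupp.Lex.lt_iff.1 h
  refine List.lex_lt_of_count_lt (by simpa using hcard) (pairwise_sort _ _) (pairwise_sort _ _)
    (x := x) ?_ fun z hz => ?_
  · simpa [← coe_count] using hx
  · simpa [← coe_count] using (hbelow z hz).symm

theorem lexLE_sort_of_toLex_toFinsupp_le {A B : Multiset ℕ} (hcard : card A = card B)
    (h : toLex (toFinsupp B) ≤ toLex (toFinsupp A)) :
    lexLE (A.sort (· ≤ ·)) (B.sort (· ≤ ·)) := by
  obtain h | h := h.eq_or_lt
  · exact .inl (by rw [toFinsupp.injective (toLex.injective h)])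
  · exact .inr (lex_sort_of_toLex_toFinsupp_lt hcard h)

theorem exists_gt_count_lt_of_card_eq {A B : Multiset ℕ} (hcard : card A = card B) {x : ℕ}
    (hx : count x B < count x A) (hbelow : ∀ z < x, count z A = count z B) :
    ∃ y, x < y ∧ count y A < count y B := by
  by_contra! habove
  have hBA : B ≤ A := le_iff_count.2 fun z => by
    rcases lt_trichotomy z x with hz | rfl | hz
    · exact (hbelow z hz).ge
    · exact hx.le
    · exact habove z hz
  have := eq_of_le_of_card_le hBA hcard.le
  subst this
  omega

theorem toLex_toFinsupp_lt_of_add_singleton_eq {A A' : Multiset ℕ} {x y : ℕ} (hxy : x < y)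
    (h : A' + {y} = A + {x}) : toLex (toFinsupp A) < toLex (toFinsupp A') := by
  have hcount : ∀ z, count z A' + count z {y} = count z A + count z {x} := fun z => by
    rw [← count_add, ← count_add, h]
  refine Finsupp.Lex.lt_iff.2 ⟨x, fun z hz => ?_, ?_⟩
  · have := hcount z
    simp only [ofLex_toLex, toFinsupp_apply, count_singleton] at this ⊢
    split_ifs at this <;> omega
  · have := hcount x
    simp only [ofLex_toLex, toFinsupp_apply, count_singleton] at this ⊢
    split_ifs at this <;> omega

end Multiset

theorem Finset.sum_comp_update_add {ι α M : Type*} [Fintype ι] [DecidableEq ι]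
    [AddCommMonoid M] (φ : α → M) (f : ι → α) (j₀ : ι) (a : α) :
    ∑ j, φ (Function.update f j₀ a j) + φ (f j₀) = ∑ j, φ (f j) + φ a := by
  rw [show (fun j => φ (Function.update f j₀ a j)) = Function.update (φ ∘ f) j₀ (φ a) from
      Function.comp_update φ f j₀ a, sum_update_of_mem (mem_univ j₀),
    sum_eq_add_sum_sdiff_singleton_of_mem (mem_univ j₀)]
  simp only [Function.comp_apply]
  abel

namespace MvPolynomial

theorem colon_span_monomial_eq_span_X {σ R : Type*} [CommSemiring R] (G : Set (σ →₀ ℕ))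
    (e : σ →₀ ℕ) (h : ∀ g ∈ G, ∃ v, e v < g v ∧ ∃ g' ∈ G, g' ≤ e + single v 1) :
    (Ideal.span ((fun c => monomial c (1 : R)) '' G)).colon (Ideal.span {monomial e (1 : R)}) =
      Ideal.span (X '' {v | ∃ g ∈ G, g ≤ e + single v 1}) := by
  apply le_antisymm
  · intro p hp
    rw [Ideal.mem_colon_span_singleton, mem_ideal_span_monomial_image] at hp
    refine mem_ideal_span_X_image.2 fun c hc => ?_
    have hce : c + e ∈ (p * monomial e 1).support := by
      rwa [mem_support_iff, coeff_mul_monomial, mul_one, ← mem_support_iff]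
    obtain ⟨g, hg, hgc⟩ := hp _ hce
    obtain ⟨v, hv, hvT⟩ := h g hg
    exact ⟨v, hvT, by have := hgc v; simp only [Finsupp.add_apply] at this; omega⟩
  · rw [Ideal.span_le]
    rintro _ ⟨v, ⟨g, hg, hge⟩, rfl⟩
    rw [SetLike.mem_coe, Ideal.mem_colon_span_singleton, X, monomial_mul, one_mul,
      mem_ideal_span_monomial_image]
    intro c hc
    rw [Finset.mem_singleton.1 (support_monomial_subset hc), add_comm]
    exact ⟨g, hg, hge⟩

theorem monomial_notMem_of_le {σ R : Type*} [CommSemiring R] {I : Ideal (MvPolynomial σ R)}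
    {a a' : σ →₀ ℕ} (ha : monomial a (1 : R) ∉ I) (h : a' ≤ a) : monomial a' (1 : R) ∉ I :=
  fun ha' => ha (I.mem_of_dvd (monomial_dvd_monomial.2 ⟨.inr h, dvd_rfl⟩) ha')

theorem lt_of_monomial_notMem {σ R : Type*} [CommSemiring R] {I : Ideal (MvPolynomial σ R)}
    {a : σ →₀ ℕ} {i : σ} {N : ℕ} (hN : monomial (single i N) (1 : R) ∈ I)
    (ha : monomial a (1 : R) ∉ I) : a i < N := by
  by_contra! h
  exact monomial_notMem_of_le ha (single_le_iff.2 h) hN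

end MvPolynomial

section Polarization

variable {K : Type} [Field K] {m : ℕ} {b : Fin m → ℕ} {I : Ideal (MvPolynomial (Fin m) K)} {k : ℕ}

variable (b) in
def genLExp (a : Fin m →₀ ℕ) : PolVars m b →₀ ℕ :=
  ∑ v ∈ Finset.univ.filter (fun v : PolVars m b => (v.2 : ℕ) = a v.1), single v 1

theorem genLExp_apply (a : Fin m →₀ ℕ) (v : PolVars m b) :
    genLExp b a v = if (v.2 : ℕ) = a v.1 then 1 else 0 := by
  simp [genLExp, finsetSum_apply, single_apply]

theorem genL_eq_monomial_genLExp (a : Fin m →₀ ℕ) : genL K b a = monomial (genLExp b a) 1 := by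
  rw [genL, genLExp, monomial_sum_one]
  rfl

theorem mem_GLkE_iff {e : PolVars m b →₀ ℕ} :
    e ∈ GLkE K b I k ↔ ∃ f : Fin k → (Fin m →₀ ℕ),
      (∀ j, monomial (f j) (1 : K) ∉ I) ∧ e = ∑ j, genLExp b (f j) := by
  simp_rw [GLkE, Set.mem_ofPred_eq, genL_eq_monomial_genLExp, ← monomial_sum_one,
    (monomial_left_injective one_ne_zero).eq_iff]

variable (b) in
def rowHom (i : Fin m) : (PolVars m b →₀ ℕ) →+ Multiset ℕ where
  toFun e := ∑ j : Fin (b i), Multiset.replicate (e ⟨i, j⟩) (j : ℕ)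
  map_zero' := by simp
  map_add' e e' := by simp [Multiset.replicate_add, Finset.sum_add_distrib]

theorem rowList_eq_sort_rowHom (e : PolVars m b →₀ ℕ) (i : Fin m) :
    rowList e i = (rowHom b i e).sort (· ≤ ·) := rfl

theorem count_rowHom (e : PolVars m b →₀ ℕ) (i : Fin m) {x : ℕ} (hx : x < b i) :
    (rowHom b i e).count x = e ⟨i, ⟨x, hx⟩⟩ := by
  simp only [rowHom, AddMonoidHom.coe_mk, ZeroHom.coe_mk, Multiset.count_sum',
    Multiset.count_replicate]
  rw [Finset.sum_eq_single ⟨x, hx⟩ (fun j _ hj => if_neg fun h => hj (Fin.ext h)) (by simp)]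
  simp

theorem rowHom_genLExp {a : Fin m →₀ ℕ} {i : Fin m} (ha : a i < b i) :
    rowHom b i (genLExp b a) = {a i} := by
  simp only [rowHom, AddMonoidHom.coe_mk, ZeroHom.coe_mk, genLExp_apply]
  rw [Finset.sum_eq_single ⟨a i, ha⟩ (fun j _ hj => by rw [if_neg fun h => hj (Fin.ext h),
    Multiset.replicate_zero]) (by simp)]
  simp

theorem rowHom_sum_genLExp (hb : ∀ i, monomial (single i (b i)) (1 : K) ∈ I)
    {f : Fin k → (Fin m →₀ ℕ)}
    (hf : ∀ j, monomial (f j) (1 : K) ∉ I) (i : Fin m) :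
    rowHom b i (∑ j, genLExp b (f j)) = ∑ j, {f j i} := by
  rw [map_sum]
  exact Finset.sum_congr rfl fun j _ => rowHom_genLExp (lt_of_monomial_notMem (hb i) (hf j))

theorem card_rowHom_of_mem_GLkE (hb : ∀ i, monomial (single i (b i)) (1 : K) ∈ I)
    {e : PolVars m b →₀ ℕ}
    (he : e ∈ GLkE K b I k) (i : Fin m) : Multiset.card (rowHom b i e) = k := by
  obtain ⟨f, hf, rfl⟩ := mem_GLkE_iff.1 he
  simp [rowHom_sum_genLExp hb hf]

theorem genLExp_update_le (a : Fin m →₀ ℕ) {i : Fin m} {x : ℕ} (hx : x < b i) :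
    genLExp b (a.update i x) ≤ genLExp b a + single ⟨i, ⟨x, hx⟩⟩ 1 := by
  rintro ⟨i', j'⟩
  rw [Finsupp.add_apply, genLExp_apply, genLExp_apply, Finsupp.update_apply]
  by_cases hi : i' = i
  · subst hi
    by_cases hj : (j' : ℕ) = x
    · obtain rfl : j' = ⟨x, hx⟩ := Fin.ext hj
      simp
    · simp [hj]
  · simp [hi]

theorem exists_exchange (hb : ∀ i, monomial (single i (b i)) (1 : K) ∈ I)
    {e e' : PolVars m b →₀ ℕ} (he : e ∈ GLkE K b I k) (he' : e' ∈ GLkE K b I k) {i : Fin m} {x : ℕ}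
    (hx : (rowHom b i e).count x < (rowHom b i e').count x)
    (hbelow : ∀ z < x, (rowHom b i e').count z = (rowHom b i e).count z) :
    ∃ hxb : x < b i, ∃ e'' ∈ GLkE K b I k, (∀ i' ≠ i, rowHom b i' e'' = rowHom b i' e) ∧
      toLex (Multiset.toFinsupp (rowHom b i e)) < toLex (Multiset.toFinsupp (rowHom b i e'')) ∧
      e'' ≤ e + single ⟨i, ⟨x, hxb⟩⟩ 1 := by
  obtain ⟨y, hxy, hy⟩ := Multiset.exists_gt_count_lt_of_card_eq
    (by rw [card_rowHom_of_mem_GLkE hb he', card_rowHom_of_mem_GLkE hb he]) hx hbelow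
  obtain ⟨f, hf, rfl⟩ := mem_GLkE_iff.1 he
  have hy_mem : y ∈ rowHom b i (∑ j, genLExp b (f j)) := Multiset.count_pos.1 (by omega)
  rw [rowHom_sum_genLExp hb hf, Multiset.mem_sum] at hy_mem
  obtain ⟨j₀, -, hj₀⟩ := hy_mem
  rw [Multiset.mem_singleton] at hj₀
  have hxb : x < b i := hxy.trans (hj₀ ▸ lt_of_monomial_notMem (hb i) (hf j₀))
  set a := (f j₀).update i x with ha_def
  have ha : monomial a (1 : K) ∉ I := monomial_notMem_of_le (hf j₀) fun t => by
    rw [ha_def, Finsupp.update_apply]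
    split_ifs with ht
    · subst ht; omega
    · rfl
  set g := Function.update f j₀ a with hg_def
  have hg : ∀ j, monomial (g j) (1 : K) ∉ I := fun j => by
    rw [hg_def, Function.update_apply]
    split_ifs
    exacts [ha, hf j]
  have hswap : ∑ j, genLExp b (g j) + genLExp b (f j₀) = ∑ j, genLExp b (f j) + genLExp b a :=
    Finset.sum_comp_update_add (genLExp b) f j₀ a
  have hrow : ∀ i', rowHom b i' (∑ j, genLExp b (g j)) + {f j₀ i'} =
      rowHom b i' (∑ j, genLExp b (f j)) + {a i'} := fun i' => by
    have := congrArg (rowHom b i') hswap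
    rwa [map_add, map_add, rowHom_genLExp (lt_of_monomial_notMem (hb i') (hf j₀)),
      rowHom_genLExp (lt_of_monomial_notMem (hb i') ha)] at this
  refine ⟨hxb, _, mem_GLkE_iff.2 ⟨g, hg, rfl⟩, fun i' hi' => ?_, ?_, ?_⟩
  · simpa [a, Finsupp.update_apply, hi'] using hrow i'
  · exact Multiset.toLex_toFinsupp_lt_of_add_singleton_eq hxy (by simpa [a, hj₀] using hrow i)
  · refine le_of_add_le_add_right (a := genLExp b (f j₀)) ?_
    calc ∑ j, genLExp b (g j) + genLExp b (f j₀) = ∑ j, genLExp b (f j) + genLExp b a := hswap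
      _ ≤ ∑ j, genLExp b (f j) + (genLExp b (f j₀) + single ⟨i, ⟨x, hxb⟩⟩ 1) := by
        gcongr
        exact genLExp_update_le _ hxb
      _ = ∑ j, genLExp b (f j) + single ⟨i, ⟨x, hxb⟩⟩ 1 + genLExp b (f j₀) := by
        rw [add_comm (genLExp b (f j₀)), add_assoc]

variable {r : (PolVars m b →₀ ℕ) → (PolVars m b →₀ ℕ) → Prop}

theorem exists_row_toLex_lt (hb : ∀ i, monomial (single i (b i)) (1 : K) ∈ I)
    (hantisymm : ∀ e ∈ GLkE K b I k, ∀ e' ∈ GLkE K b I k, r e e' → r e' e → e = e')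
    (hext : ∀ e ∈ GLkE K b I k, ∀ e' ∈ GLkE K b I k,
      (∀ i : Fin m, lexLE (rowList e i) (rowList e' i)) → r e e')
    {e e' : PolVars m b →₀ ℕ} (he : e ∈ GLkE K b I k) (he' : e' ∈ GLkE K b I k)
    (hr : r e' e) (hne : e' ≠ e) :
    ∃ i, toLex (Multiset.toFinsupp (rowHom b i e)) <
      toLex (Multiset.toFinsupp (rowHom b i e')) := by
  by_contra! h
  refine hne (hantisymm e' he' e he hr (hext e he e' he' fun i => ?_))
  rw [rowList_eq_sort_rowHom, rowList_eq_sort_rowHom]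
  exact Multiset.lexLE_sort_of_toLex_toFinsupp_le
    (by rw [card_rowHom_of_mem_GLkE hb he, card_rowHom_of_mem_GLkE hb he']) (h i)

theorem exists_variable_of_precedes (hb : ∀ i, monomial (single i (b i)) (1 : K) ∈ I)
    (hantisymm : ∀ e ∈ GLkE K b I k, ∀ e' ∈ GLkE K b I k, r e e' → r e' e → e = e')
    (hext : ∀ e ∈ GLkE K b I k, ∀ e' ∈ GLkE K b I k,
      (∀ i : Fin m, lexLE (rowList e i) (rowList e' i)) → r e e')
    {e e' : PolVars m b →₀ ℕ} (he : e ∈ GLkE K b I k) (he' : e' ∈ GLkE K b I k)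
    (hr : r e' e) (hne : e' ≠ e) :
    ∃ v, e v < e' v ∧ ∃ e'' ∈ GLkE K b I k, r e'' e ∧ e'' ≠ e ∧ e'' ≤ e + single v 1 := by
  obtain ⟨i, hi⟩ := exists_row_toLex_lt hb hantisymm hext he he' hr hne
  obtain ⟨x, hbelow, hx⟩ := Finsupp.Lex.lt_iff.1 hi
  obtain ⟨hxb, e'', he'', hrows, hlt, hle⟩ :=
    exists_exchange hb he he' hx fun z hz => (hbelow z hz).symm
  refine ⟨⟨i, ⟨x, hxb⟩⟩, by simpa [count_rowHom _ _ hxb] using hx, e'', he'',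
    hext e'' he'' e he fun i' => ?_, fun h => (h ▸ hlt).false, hle⟩
  rw [rowList_eq_sort_rowHom, rowList_eq_sort_rowHom]
  by_cases hi' : i' = i
  · subst hi'
    exact Multiset.lexLE_sort_of_toLex_toFinsupp_le
      (by rw [card_rowHom_of_mem_GLkE hb he'', card_rowHom_of_mem_GLkE hb he]) hlt.le
  · exact .inl (by rw [hrows i' hi'])

end Polarization

theorem statement14_general {K : Type} [Field K] {n : ℕ} (b : Fin n → ℕ)
    (I : Ideal (MvPolynomial (Fin n) K)) (hI : ZeroDimData K b I)
    (k : ℕ)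
    (r : (PolVars n b →₀ ℕ) → (PolVars n b →₀ ℕ) → Prop)
    (hantisymm : ∀ e ∈ GLkE K b I k, ∀ e' ∈ GLkE K b I k, r e e' → r e' e → e = e')
    (hext : ∀ e ∈ GLkE K b I k, ∀ e' ∈ GLkE K b I k,
      (∀ i : Fin n, lexLE (rowList e i) (rowList e' i)) → r e e') :
    ∀ e ∈ GLkE K b I k,
      ∃ T : Set (PolVars n b),
        (Ideal.span {p : MvPolynomial (PolVars n b) K |
            ∃ e' ∈ GLkE K b I k, r e' e ∧ e' ≠ e ∧ p = monomial e' (1 : K)}).colon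
          (Ideal.span {(monomial e (1 : K) : MvPolynomial (PolVars n b) K)})
        = Ideal.span ((fun v => (X v : MvPolynomial (PolVars n b) K)) '' T) := by
  intro e he
  have hb : ∀ i, monomial (single i (b i)) (1 : K) ∈ I := fun i => (hI.2.2 i).2.1
  set G := {e' | e' ∈ GLkE K b I k ∧ r e' e ∧ e' ≠ e}
  have hgens : {p : MvPolynomial (PolVars n b) K |
      ∃ e' ∈ GLkE K b I k, r e' e ∧ e' ≠ e ∧ p = monomial e' (1 : K)} =
      (fun c => monomial c 1) '' G := by
    ext p
    constructor
    · rintro ⟨e', he', hr, hne, rfl⟩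
      exact ⟨e', ⟨he', hr, hne⟩, rfl⟩
    · rintro ⟨e', ⟨he', hr, hne⟩, rfl⟩
      exact ⟨e', he', hr, hne, rfl⟩
  refine ⟨_, hgens ▸ colon_span_monomial_eq_span_X G e ?_⟩
  rintro e' ⟨he', hr, hne⟩
  obtain ⟨v, hv, e'', he'', hr'', hne'', hle⟩ :=
    exists_variable_of_precedes hb hantisymm hext he he' hr hne
  exact ⟨v, hv, e'', ⟨he'', hr'', hne''⟩, hle⟩

/-- For every `k ≥ 1` the ideal `L(I)^k` has linear quotients: with
respect to any total order on the minimal generating set `G(L(I)^k)` extending the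
partial order `≼` (defined via the row-wise lexicographic comparison of the sequences
`J(·,i)`), for every `u ∈ G(L(I)^k)` the colon ideal `({w ∈ G(L(I)^k) : w < u}) : (u)`
is generated by a subset of the variables of `S^℘`. -/
theorem statement14 {K : Type} [Field K] {n : ℕ} (b : Fin n → ℕ)
    (I : Ideal (MvPolynomial (Fin n) K)) (hI : ZeroDimData K b I)
    (k : ℕ) (hk : 1 ≤ k)
    (r : (PolVars n b →₀ ℕ) → (PolVars n b →₀ ℕ) → Prop)
    (hrefl : ∀ e ∈ GLkE K b I k, r e e)
    (hantisymm : ∀ e ∈ GLkE K b I k, ∀ e' ∈ GLkE K b I k, r e e' → r e' e → e = e')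
    (htrans : ∀ e ∈ GLkE K b I k, ∀ e' ∈ GLkE K b I k, ∀ e'' ∈ GLkE K b I k,
      r e e' → r e' e'' → r e e'')
    (htotal : ∀ e ∈ GLkE K b I k, ∀ e' ∈ GLkE K b I k, r e e' ∨ r e' e)
    (hext : ∀ e ∈ GLkE K b I k, ∀ e' ∈ GLkE K b I k,
      (∀ i : Fin n, lexLE (rowList e i) (rowList e' i)) → r e e') :
    ∀ e ∈ GLkE K b I k,
      ∃ T : Set (PolVars n b),
        (Ideal.span {p : MvPolynomial (PolVars n b) K |
            ∃ e' ∈ GLkE K b I k, r e' e ∧ e' ≠ e ∧ p = monomial e' (1 : K)}).colon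
          (Ideal.span {(monomial e (1 : K) : MvPolynomial (PolVars n b) K)})
        = Ideal.span ((fun v => (X v : MvPolynomial (PolVars n b) K)) '' T) :=
  statement14_general b I hI k r hantisymm hext

end
end

section
/- For k ≥ 1 set M_k = max{deg lcm(u_1, …, u_k) : u_1, …, u_k ∈ Mon(S∖I)}. Then: (1) M_k ≤ Σ_{i=1}^n (b_i − 1) for all k; (2) M_k = Σ_{i=1}^n (b_i − 1) for all k ≥ n; and (3) if M_k < Σ_{i=1}^n (b_i − 1), then M_{k+1} > M_k. -/
/-!
A monomial `x^a` outside `I` has `a_i ≤ b_i - 1` for every `i`, since otherwise it is a multiple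
of `x_i^{b_i} ∈ I`; hence the lcm of monomials outside `I` divides `∏ x_i^{b_i - 1}`, giving (1).
Conversely the pure powers `x_i^{b_i - 1}` lie outside `I`, and any `n` of the `k` slots can be
filled with them, giving (2). If an optimal `k`-tuple has lcm of degree below `Σ (b_i - 1)`, some
exponent `i` of its lcm is below `b_i - 1`, and adding `x_i^{b_i - 1}` as a `(k+1)`-st monomial
raises the degree, giving (3).
-/

open MvPolynomial

noncomputable section

open Finset

section LcmDeg

variable {σ : Type*} [Fintype σ]

/-- The degree of `lcm(x^{f 0}, …, x^{f (k-1)})`. -/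
def lcmDeg {k : ℕ} (f : Fin k → σ →₀ ℕ) : ℕ :=
  ∑ i, univ.sup fun j => f j i

def lcmDegs (A : Set (σ →₀ ℕ)) (k : ℕ) : Set ℕ :=
  {d | ∃ f : Fin k → σ →₀ ℕ, (∀ j, f j ∈ A) ∧ d = lcmDeg f}

theorem lcmDeg_le_sum {k : ℕ} {f : Fin k → σ →₀ ℕ} {c : σ → ℕ} (hf : ∀ j i, f j i ≤ c i) :
    lcmDeg f ≤ ∑ i, c i :=
  sum_le_sum fun i _ => Finset.sup_le fun j _ => hf j i

theorem sum_le_lcmDeg {k : ℕ} {f : Fin k → σ →₀ ℕ} {c : σ → ℕ}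
    (hf : ∀ i, ∃ j, c i ≤ f j i) : ∑ i, c i ≤ lcmDeg f :=
  sum_le_sum fun i _ =>
    let ⟨j, hj⟩ := hf i
    hj.trans (le_sup (f := fun j => f j i) (mem_univ j))

theorem lcmDeg_lt_lcmDeg_cons {k : ℕ} (f : Fin k → σ →₀ ℕ) {a : σ →₀ ℕ}
    (h : ∃ i, (univ.sup fun j => f j i) < a i) : lcmDeg f < lcmDeg (Fin.cons a f) := by
  obtain ⟨i₀, hi₀⟩ := h
  refine sum_lt_sum (fun i _ => Finset.sup_le fun j _ => ?_) ⟨i₀, mem_univ _, ?_⟩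
  · exact le_sup (f := fun j => (Fin.cons a f : Fin (k + 1) → σ →₀ ℕ) j i) (mem_univ j.succ)
  · exact hi₀.trans_le (le_sup (f := fun j => (Fin.cons a f : Fin (k + 1) → σ →₀ ℕ) j i₀)
      (mem_univ 0))

variable {A : Set (σ →₀ ℕ)} {c : σ → ℕ}

theorem lcmDegs_nonempty (hA : A.Nonempty) (k : ℕ) : (lcmDegs A k).Nonempty :=
  let ⟨a, ha⟩ := hA
  ⟨_, fun _ => a, fun _ => ha, rfl⟩

theorem sum_mem_upperBounds_lcmDegs (hA : ∀ a ∈ A, ∀ i, a i ≤ c i) (k : ℕ) :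
    ∑ i, c i ∈ upperBounds (lcmDegs A k) := by
  rintro d ⟨f, hf, rfl⟩
  exact lcmDeg_le_sum fun j => hA _ (hf j)

theorem sSup_lcmDegs_le (hA : ∀ a ∈ A, ∀ i, a i ≤ c i) (hne : A.Nonempty) (k : ℕ) :
    sSup (lcmDegs A k) ≤ ∑ i, c i :=
  csSup_le (lcmDegs_nonempty hne k) (sum_mem_upperBounds_lcmDegs hA k)

end LcmDeg

section FinVars

variable {n : ℕ} {A : Set (Fin n →₀ ℕ)} {c : Fin n → ℕ}

/-- With at least `n` slots, the `i`-th slot takes `x_i^{c i}` and the others any element of `A`. -/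
theorem exists_sum_le_lcmDeg (hne : A.Nonempty) (hsingle : ∀ i, Finsupp.single i (c i) ∈ A)
    {k : ℕ} (hk : n ≤ k) : ∃ f : Fin k → Fin n →₀ ℕ, (∀ j, f j ∈ A) ∧ ∑ i, c i ≤ lcmDeg f := by
  obtain ⟨a₀, ha₀⟩ := hne
  refine ⟨fun j => if h : (j : ℕ) < n then Finsupp.single ⟨j, h⟩ (c ⟨j, h⟩) else a₀,
    fun j => ?_, sum_le_lcmDeg fun i => ⟨Fin.castLE hk i, ?_⟩⟩
  · dsimp only
    split_ifs
    exacts [hsingle _, ha₀]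
  · simp

theorem sSup_lcmDegs_eq_sum (hA : ∀ a ∈ A, ∀ i, a i ≤ c i) (hne : A.Nonempty)
    (hsingle : ∀ i, Finsupp.single i (c i) ∈ A) {k : ℕ} (hk : n ≤ k) :
    sSup (lcmDegs A k) = ∑ i, c i := by
  refine (sSup_lcmDegs_le hA hne k).antisymm ?_
  obtain ⟨f, hf, hsum⟩ := exists_sum_le_lcmDeg hne hsingle hk
  exact hsum.trans (le_csSup ⟨_, sum_mem_upperBounds_lcmDegs hA k⟩ ⟨f, hf, rfl⟩)

theorem sSup_lcmDegs_lt_succ (hA : ∀ a ∈ A, ∀ i, a i ≤ c i) (hne : A.Nonempty)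
    (hsingle : ∀ i, Finsupp.single i (c i) ∈ A) {k : ℕ} (hlt : sSup (lcmDegs A k) < ∑ i, c i) :
    sSup (lcmDegs A k) < sSup (lcmDegs A (k + 1)) := by
  obtain ⟨f, hf, hmax⟩ := Nat.sSup_mem (lcmDegs_nonempty hne k)
    ⟨_, sum_mem_upperBounds_lcmDegs hA k⟩
  obtain ⟨i₀, hi₀⟩ : ∃ i, (univ.sup fun j => f j i) < c i := by
    by_contra! h
    exact hlt.not_ge (hmax ▸ sum_le_sum fun i _ => h i)
  calc sSup (lcmDegs A k) = lcmDeg f := hmax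
    _ < lcmDeg (Fin.cons (Finsupp.single i₀ (c i₀)) f) := lcmDeg_lt_lcmDeg_cons f ⟨i₀, by simpa⟩
    _ ≤ sSup (lcmDegs A (k + 1)) :=
      le_csSup ⟨_, sum_mem_upperBounds_lcmDegs hA _⟩
        ⟨_, Fin.cases (hsingle i₀) hf, rfl⟩

end FinVars

section MonomialIdeal

variable {σ R : Type*} [CommSemiring R] {I : Ideal (MvPolynomial σ R)}

theorem monomial_mem_of_le_s19 {c a : σ →₀ ℕ} (hc : monomial c (1 : R) ∈ I) (hca : c ≤ a) :
    monomial a (1 : R) ∈ I :=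
  I.mem_of_dvd (monomial_dvd_monomial.mpr ⟨Or.inr hca, one_dvd _⟩) hc

theorem lt_of_monomial_single_mem {i : σ} {e : ℕ} {a : σ →₀ ℕ}
    (he : monomial (Finsupp.single i e) (1 : R) ∈ I) (ha : monomial a (1 : R) ∉ I) : a i < e :=
  lt_of_not_ge fun hle => ha (monomial_mem_of_le_s19 he (Finsupp.single_le_iff.mpr hle))

end MonomialIdeal

/-- For `k ≥ 1` set
`M_k = max{deg lcm(u_1,…,u_k) : u_1,…,u_k ∈ Mon(S∖I)}`.  Then:
(1) `M_k ≤ Σ_i (b_i − 1)` for all `k ≥ 1`;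
(2) `M_k = Σ_i (b_i − 1)` for all `k ≥ n`; and
(3) if `M_k < Σ_i (b_i − 1)` then `M_{k+1} > M_k`. -/
theorem statement19 {K : Type} [Field K] {n : ℕ} (b : Fin n → ℕ)
    (I : Ideal (MvPolynomial (Fin n) K)) (hI : ZeroDimData K b I) :
    (∀ k : ℕ, 1 ≤ k → maxLcmDeg K I k ≤ ∑ i : Fin n, (b i - 1)) ∧
    (∀ k : ℕ, n ≤ k → maxLcmDeg K I k = ∑ i : Fin n, (b i - 1)) ∧
    (∀ k : ℕ, 1 ≤ k → maxLcmDeg K I k < ∑ i : Fin n, (b i - 1) →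
      maxLcmDeg K I k < maxLcmDeg K I (k + 1)) := by
  obtain ⟨-, hItop, hb⟩ := hI
  set A : Set (Fin n →₀ ℕ) := {a | monomial a (1 : K) ∉ I}
  have hA : ∀ a ∈ A, ∀ i, a i ≤ b i - 1 := fun a ha i =>
    Nat.le_sub_one_of_lt (lt_of_monomial_single_mem (hb i).2.1 ha)
  have hsingle : ∀ i, Finsupp.single i (b i - 1) ∈ A := fun i =>
    (hb i).2.2 _ (Nat.sub_lt (hb i).1 one_pos)
  have hne : A.Nonempty :=
    ⟨0, show monomial 0 (1 : K) ∉ I by rwa [monomial_zero', C_1, ← Ideal.eq_top_iff_one]⟩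
  exact ⟨fun k _ => sSup_lcmDegs_le hA hne k, fun k hk => sSup_lcmDegs_eq_sum hA hne hsingle hk,
    fun k _ => sSup_lcmDegs_lt_succ hA hne hsingle⟩

end
end
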